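/- arXiv:2604.22007 — 2 statements merged into one kernel-verified Lean document; each statement's English description precedes it below -/
import Mathlib

section
/- Let n ≥ 2 and let x_1, x_2 ∈ K_n satisfy x_1·a_1 = f and x_2·a_1 = f. Suppose the canonical form of x_1 is the word w_1 a_1 u_1 and the canonical form of x_2 is the word w_2 a_1 u_2, where w_1, u_1, w_2, u_2 are words over {a_2, a_3, …, a_n} (i.e. not containing a_1). If φ(w_1) = φ(w_2) in K_n, then x_1 = x_2. (In other words, the map sending such an x to the image under φ of the prefix of its canonical form preceding a_1 is injective on the set {x ∈ K_n : x·a_1 = f, the canonical form of x contains a_1}.) -/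
namespace Kiselman

/-- The defining relations of Kiselman's semigroup on the free monoid over `Fin n`,
where the index `i : Fin n` represents the generator `a_{i+1}` (so letters are 0-based). -/
def Rel (n : ℕ) : FreeMonoid (Fin n) → FreeMonoid (Fin n) → Prop := fun u v =>
  (∃ i : Fin n, u = .of i * .of i ∧ v = .of i) ∨
  (∃ i j : Fin n, j < i ∧
    ((u = .of i * .of j * .of i ∧ v = .of i * .of j) ∨
     (u = .of j * .of i * .of j ∧ v = .of i * .of j)))

/-- Kiselman's semigroup (monoid) `K n`, presented by the relations `Rel n`. -/
def K (n : ℕ) : Type := (conGen (Rel n)).Quotient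

instance (n : ℕ) : Monoid (K n) := inferInstanceAs (Monoid (conGen (Rel n)).Quotient)

/-- The canonical epimorphism `φ` from the free monoid onto `K n`. -/
def phi (n : ℕ) : FreeMonoid (Fin n) →* K n := Con.mk' _

/-- `φ` applied to a word given as a list of (0-based) letters. -/
def phiL (n : ℕ) (w : List (Fin n)) : K n := phi n (FreeMonoid.ofList w)

/-- The generator `a_{i+1}` of `K n` (`i` is the 0-based index). -/
def gen {n : ℕ} (i : Fin n) : K n := phi n (FreeMonoid.of i)

/-- The word `a_hi a_{hi-1} ⋯ a_lo` (letters named 1-based), as a list of 0-based indices: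
`[hi-1, hi-2, …, lo-1]` (capped at `n`). -/
def descList (n lo hi : ℕ) : List (Fin n) :=
  ((List.finRange n).filter (fun k => decide (lo ≤ k.val + 1 ∧ k.val + 1 ≤ hi))).reverse

/-- The zero element `f = a_n a_{n-1} ⋯ a_2 a_1` of `K n`. -/
def fEl (n : ℕ) : K n := phiL n (descList n 1 n)

/-- A word `w` is canonical if for every factorization `w = p ++ [i] ++ u ++ [i] ++ q`
there are letters `j > i` and `k < i` occurring in `u`. -/
def Canonical {n : ℕ} (w : List (Fin n)) : Prop :=
  ∀ (p u q : List (Fin n)) (i : Fin n),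
    w = p ++ [i] ++ u ++ [i] ++ q →
    (∃ j ∈ u, i < j) ∧ (∃ k ∈ u, k < i)

/-- The submonoid of `K n` generated by `{a_2, a_3, …, a_n}`. -/
def upper (n : ℕ) : Submonoid (K n) := Submonoid.closure (gen '' {i : Fin n | i.val ≠ 0})

/-- The submonoid of `K n` generated by `{a_1, a_2, …, a_{n-1}}`. -/
def lower (n : ℕ) : Submonoid (K n) := Submonoid.closure (gen '' {i : Fin n | i.val + 1 ≠ n})

/-- `m(x) = min { i ∈ {0,…,n} : x ⬝ (a_i a_{i-1} ⋯ a_1) = f }`. -/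
noncomputable def mIdx {n : ℕ} (x : K n) : ℕ :=
  sInf {i : ℕ | x * phiL n (descList n 1 i) = fEl n}



/-- The descending list `[a, a-1, …, b]` (empty when `a + 1 ≤ b`). -/
def desc (a b : ℕ) : List ℕ := (List.range' b (a + 1 - b)).reverse

lemma desc_length (a b : ℕ) : (desc a b).length = a + 1 - b := by
  simp [desc]

lemma desc_eq_nil (a b : ℕ) (h : a < b) : desc a b = [] := by
  have : a + 1 - b = 0 := by omega
  simp [desc, this]

lemma desc_cons (a b : ℕ) (ha : 1 ≤ a) (h : b ≤ a) : desc a b = a :: desc (a - 1) b := by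
  have h1 : a + 1 - b = (a - b) + 1 := by omega
  have h2 : (a - 1) + 1 - b = a - b := by omega
  have h3 : b + (a - b) = a := by omega
  rw [desc, h1, List.range'_concat, List.reverse_append]
  simp [h3, desc, h2]

lemma desc_concat (a b : ℕ) (h : b ≤ a) : desc a b = desc a (b + 1) ++ [b] := by
  have h1 : a + 1 - b = (a + 1 - (b + 1)) + 1 := by omega
  rw [desc, h1, List.range'_succ, List.reverse_cons, desc]

lemma desc_append (a b c : ℕ) (hbc : b ≤ c + 1) (hca : c ≤ a) :
    desc a b = desc a (c + 1) ++ desc c b := by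
  have h2 : b + 1 * (c + 1 - b) = c + 1 := by omega
  have h3 : (c + 1 - b) + (a - c) = a + 1 - b := by omega
  have key := List.range'_append (s := b) (m := c + 1 - b) (n := a - c) (step := 1)
  rw [h2, h3] at key
  rw [desc, desc, desc, show a + 1 - (c + 1) = a - c by omega, ← List.reverse_append, key]

lemma mem_desc {x a b : ℕ} : x ∈ desc a b ↔ b ≤ x ∧ x ≤ a := by
  simp only [desc, List.mem_reverse, List.mem_range']
  constructor
  · rintro ⟨i, hi, rfl⟩; omega
  · rintro ⟨h1, h2⟩; exact ⟨x - b, by omega, by omega⟩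

/-- splitting a descending run (with `1 ≤ b` to avoid ℕ-subtraction pathology) -/
lemma desc_eq_append {a b : ℕ} {l₁ l₂ : List ℕ} (hb : 1 ≤ b) (hba : b ≤ a + 1)
    (h : desc a b = l₁ ++ l₂) :
    ∃ c, b ≤ c ∧ c ≤ a + 1 ∧ l₁ = desc a c ∧ l₂ = desc (c - 1) b := by
  have hrev : List.range' b (a + 1 - b) = l₂.reverse ++ l₁.reverse := by
    have := congrArg List.reverse h
    simpa [desc, List.reverse_append] using this
  have aux : ∀ (m₁ : List ℕ) (s k : ℕ) (m₂ : List ℕ), List.range' s k = m₁ ++ m₂ →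
      m₁ = List.range' s m₁.length ∧ m₂ = List.range' (s + m₁.length) m₂.length := by
    intro m₁
    induction m₁ with
    | nil => intro s k m₂ h; simp at h ⊢; rw [← h, List.length_range']
    | cons x t ih =>
      intro s k m₂ h
      cases k with
      | zero => simp at h
      | succ k' =>
        rw [List.range'_succ] at h
        injection h with h1 h2
        obtain ⟨ih1, ih2⟩ := ih (s + 1) k' m₂ h2
        subst h1
        refine ⟨?_, ?_⟩
        · rw [List.length_cons, List.range'_succ, ← ih1]
        · rw [List.length_cons, show s + (t.length + 1) = s + 1 + t.length by omega, ← ih2]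
  obtain ⟨e1, e2⟩ := aux l₂.reverse b (a + 1 - b) l₁.reverse hrev
  simp only [List.length_reverse] at e1 e2
  have hlen : l₂.length + l₁.length = a + 1 - b := by
    have h6 := congrArg List.length hrev
    rw [List.length_range', List.length_append, List.length_reverse, List.length_reverse] at h6
    omega
  refine ⟨b + l₂.length, by omega, by omega, ?_, ?_⟩
  · have h4 : l₁ = (List.range' (b + l₂.length) l₁.length).reverse := by
      have := congrArg List.reverse e2; simpa using this
    rw [desc, show a + 1 - (b + l₂.length) = l₁.length by omega]
    exact h4
  · have h5 : l₂ = (List.range' b l₂.length).reverse := by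
      have := congrArg List.reverse e1; simpa using this
    rw [desc, show (b + l₂.length - 1) + 1 - b = l₂.length by omega]
    exact h5

/-- a higher-starting staircase is a prefix (hence sublist) of a lower-starting one -/
lemma desc_sublist (a b b' : ℕ) (h : b ≤ b') : (desc a b').Sublist (desc a b) := by
  rcases le_or_gt b' (a + 1) with hb' | hb'
  · rcases Nat.eq_zero_or_pos b' with rfl | hb'pos
    · have : b = 0 := by omega
      subst this; exact List.Sublist.refl _
    · have h2 : desc a b = desc a ((b' - 1) + 1) ++ desc (b' - 1) b :=
        desc_append a b (b' - 1) (by omega) (by omega)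
      rw [show b' - 1 + 1 = b' by omega] at h2
      rw [h2]; exact List.sublist_append_left _ _
  · rw [desc_eq_nil a b' (by omega)]; exact List.nil_sublist _


/-! ### Subsequence-progress machinery -/

def step (d : List ℕ) (c : ℕ) (p : ℕ) : ℕ := if d[p]? = some c then p + 1 else p

def proc (d : List ℕ) (l : List ℕ) (p : ℕ) : ℕ := l.foldl (fun q c => step d c q) p

lemma proc_cons (d : List ℕ) (c : ℕ) (l : List ℕ) (p : ℕ) :
    proc d (c :: l) p = proc d l (step d c p) := rfl

theorem drop_sublist_iff (d : List ℕ) :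
    ∀ (l : List ℕ) (p : ℕ), p ≤ d.length →
    ((d.drop p).Sublist l ↔ proc d l p = d.length) := by
  intro l
  induction l with
  | nil =>
    intro p hp
    show _ ↔ p = d.length
    rw [List.sublist_nil, List.drop_eq_nil_iff]
    omega
  | cons c t ih =>
    intro p hp
    by_cases hc : d[p]? = some c
    · have hplt : p < d.length := (List.getElem?_eq_some_iff.1 hc).1
      rw [proc_cons, step, if_pos hc, ← ih (p + 1) (by omega)]
      have hdp : d.drop p = c :: d.drop (p + 1) := by
        rw [← List.getElem_cons_drop hplt, (List.getElem?_eq_some_iff.1 hc).2]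
      rw [hdp, List.cons_sublist_cons]
    · rw [proc_cons, step, if_neg hc, ← ih p hp]
      rcases lt_or_eq_of_le hp with hlt | heq
      · have hdp : d.drop p = d[p] :: d.drop (p + 1) := (List.getElem_cons_drop hlt).symm
        constructor
        · intro hsub
          rcases List.sublist_cons_iff.1 hsub with h | ⟨r, hr, hrs⟩
          · exact h
          · rw [hdp] at hr
            injection hr with h1 h2
            exact absurd (List.getElem?_eq_some_iff.2 ⟨hlt, h1⟩) hc
        · intro hsub
          exact hsub.trans (List.sublist_cons_self c t)
      · rw [heq, List.drop_length]
        simp [List.nil_sublist]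

lemma sublist_iff_proc (d l : List ℕ) : d.Sublist l ↔ proc d l 0 = d.length := by
  have := drop_sublist_iff d l 0 (Nat.zero_le _)
  rwa [List.drop_zero] at this

/-- strict descent along consecutive entries -/
def DescChain (d : List ℕ) : Prop := ∀ p x y, d[p]? = some x → d[p+1]? = some y → y < x

lemma descChain_desc (a b : ℕ) : DescChain (desc a b) := by
  intro p x y hx hy
  set k := a + 1 - b with hk
  have hlen : (desc a b).length = k := desc_length a b
  have hy' : p + 1 < k := by
    have := (List.getElem?_eq_some_iff.1 hy).1
    omega
  have hx' : p < k := by omega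
  rw [desc] at hx hy
  rw [List.getElem?_reverse (by simpa [List.length_range'] using hx')] at hx
  rw [List.getElem?_reverse (by simpa [List.length_range'] using hy')] at hy
  rw [List.length_range'] at hx hy
  rw [List.getElem?_range' (show k - 1 - p < k by omega)] at hx
  rw [List.getElem?_range' (show k - 1 - (p+1) < k by omega)] at hy
  injection hx with hx
  injection hy with hy
  omega

section StepLemmas

variable {d : List ℕ} (hd : DescChain d)

lemma step_stay {c p : ℕ} (h : d[p]? ≠ some c) : step d c p = p := if_neg h
lemma step_go {c p : ℕ} (h : d[p]? = some c) : step d c p = p + 1 := if_pos h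

include hd in
lemma s_idem (i p : ℕ) : step d i (step d i p) = step d i p := by
  by_cases h : d[p]? = some i
  · rw [step_go h]
    apply step_stay
    intro hcon
    exact absurd (hd p i i h hcon) (lt_irrefl i)
  · rw [step_stay h, step_stay h]

include hd in
lemma s_iji {i j : ℕ} (hji : j < i) (p : ℕ) :
    step d i (step d j (step d i p)) = step d j (step d i p) := by
  by_cases h1 : d[p]? = some i
  · rw [step_go h1]
    by_cases h2 : d[p+1]? = some j
    · rw [step_go h2]
      apply step_stay
      intro hcon
      have := hd (p+1) j i h2 hcon
      omega
    · rw [step_stay h2]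
      apply step_stay
      intro hcon
      exact absurd (hd p i i h1 hcon) (lt_irrefl i)
  · rw [step_stay h1]
    by_cases h2 : d[p]? = some j
    · rw [step_go h2]
      apply step_stay
      intro hcon
      have := hd p j i h2 hcon
      omega
    · rw [step_stay h2]
      exact step_stay h1

include hd in
lemma s_jij {i j : ℕ} (hji : j < i) (p : ℕ) :
    step d j (step d i (step d j p)) = step d j (step d i p) := by
  by_cases h1 : d[p]? = some j
  · rw [step_go h1]
    have hine : d[p]? ≠ some i := by rw [h1]; intro hcon; injection hcon with hc; omega
    rw [step_stay hine]
    have h2 : d[p+1]? ≠ some i := by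
      intro hcon
      have := hd p j i h1 hcon
      omega
    rw [step_stay h2, step_go h1]
    apply step_stay
    intro hcon
    exact absurd (hd p j j h1 hcon) (lt_irrefl j)
  · rw [step_stay h1]

end StepLemmas

/-! ### The invariance of subsequence progress under the Kiselman relations -/

def chi (n : ℕ) (d : List ℕ) : FreeMonoid (Fin n) →* (Function.End ℕ)ᵐᵒᵖ :=
  FreeMonoid.lift fun c => MulOpposite.op (step d c.val)

lemma chi_ofList (n : ℕ) (d : List ℕ) (l : List (Fin n)) (p : ℕ) :
    (MulOpposite.unop (chi n d (FreeMonoid.ofList l))) p = proc d (l.map Fin.val) p := by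
  induction l generalizing p with
  | nil => rfl
  | cons c t ih =>
    rw [FreeMonoid.ofList_cons, map_mul, MulOpposite.unop_mul]
    show (MulOpposite.unop (chi n d (FreeMonoid.ofList t)))
        ((MulOpposite.unop (chi n d (FreeMonoid.of c))) p) = _
    rw [show chi n d (FreeMonoid.of c) = MulOpposite.op (step d c.val) from
      FreeMonoid.lift_eval_of _ c]
    rw [ih, List.map_cons, proc_cons]
    rfl

lemma chi_respects (n : ℕ) (d : List ℕ) (hd : DescChain d) :
    ∀ x y, Rel n x y → (Con.ker (chi n d)) x y := by
  intro x y hr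
  rw [Con.ker_rel]
  rcases hr with ⟨i, rfl, rfl⟩ | ⟨i, j, hji, ⟨rfl, rfl⟩ | ⟨rfl, rfl⟩⟩
  · apply MulOpposite.unop_injective
    funext p
    have h1 := chi_ofList n d [i, i] p
    have h2 := chi_ofList n d [i] p
    rw [show FreeMonoid.ofList [i, i] = FreeMonoid.of i * FreeMonoid.of i by rfl] at h1
    rw [show FreeMonoid.ofList [i] = FreeMonoid.of i by rfl] at h2
    rw [h1, h2]
    show proc d [i.val, i.val] p = proc d [i.val] p
    show step d i.val (step d i.val p) = step d i.val p
    exact s_idem hd i.val p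
  · apply MulOpposite.unop_injective
    funext p
    have h1 := chi_ofList n d [i, j, i] p
    have h2 := chi_ofList n d [i, j] p
    rw [show FreeMonoid.ofList [i, j, i] = FreeMonoid.of i * FreeMonoid.of j * FreeMonoid.of i
      by rfl] at h1
    rw [show FreeMonoid.ofList [i, j] = FreeMonoid.of i * FreeMonoid.of j by rfl] at h2
    rw [h1, h2]
    show step d i.val (step d j.val (step d i.val p)) = step d j.val (step d i.val p)
    exact s_iji hd hji p
  · apply MulOpposite.unop_injective
    funext p
    have h1 := chi_ofList n d [j, i, j] p
    have h2 := chi_ofList n d [i, j] p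
    rw [show FreeMonoid.ofList [j, i, j] = FreeMonoid.of j * FreeMonoid.of i * FreeMonoid.of j
      by rfl] at h1
    rw [show FreeMonoid.ofList [i, j] = FreeMonoid.of i * FreeMonoid.of j by rfl] at h2
    rw [h1, h2]
    show step d j.val (step d i.val (step d j.val p)) = step d j.val (step d i.val p)
    exact s_jij hd hji p

/-- Transfer of descending subsequences along `phiL`-equalities. -/
lemma sublist_transfer {n : ℕ} {a b : List (Fin n)} (h : phiL n a = phiL n b)
    {d : List ℕ} (hd : DescChain d) (hs : d.Sublist (a.map Fin.val)) :
    d.Sublist (b.map Fin.val) := by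
  have hcg : (conGen (Rel n)) (FreeMonoid.ofList a) (FreeMonoid.ofList b) :=
    ((Con.eq _).1 h)
  have hle : conGen (Rel n) ≤ Con.ker (chi n d) := Con.conGen_le.2 (chi_respects n d hd)
  have hk : chi n d (FreeMonoid.ofList a) = chi n d (FreeMonoid.ofList b) :=
    (Con.ker_rel _).1 (Con.le_def.1 hle hcg)
  have ha := chi_ofList n d a 0
  have hb := chi_ofList n d b 0
  rw [hk, hb] at ha
  rw [sublist_iff_proc] at hs ⊢
  rw [ha]
  exact hs

/-! ### Canonicity extraction over ℕ values -/

lemma canonN {n : ℕ} {c : List (Fin n)} (hc : Canonical c) {P G Q : List ℕ} {i : ℕ}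
    (h : c.map Fin.val = P ++ i :: (G ++ i :: Q)) :
    (∃ j ∈ G, i < j) ∧ (∃ k ∈ G, k < i) := by
  rw [show P ++ i :: (G ++ i :: Q) = P ++ (i :: (G ++ i :: Q)) from rfl,
    List.map_eq_append_iff] at h
  obtain ⟨p', r₁, rfl, hp', hr₁⟩ := h
  rw [List.map_eq_cons_iff] at hr₁
  obtain ⟨a, r₂, rfl, ha, hr₂⟩ := hr₁
  rw [List.map_eq_append_iff] at hr₂
  obtain ⟨g', r₃, rfl, hg', hr₃⟩ := hr₂
  rw [List.map_eq_cons_iff] at hr₃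
  obtain ⟨a₂, q', rfl, ha₂, hq'⟩ := hr₃
  have haa : a₂ = a := Fin.val_injective (by rw [ha, ha₂])
  subst haa
  have hfact : p' ++ a₂ :: (g' ++ a₂ :: q')
      = p' ++ [a₂] ++ g' ++ [a₂] ++ q' := by simp
  obtain ⟨⟨j, hj, hij⟩, ⟨k, hk, hki⟩⟩ := hc p' g' q' a₂ hfact
  subst ha
  subst hg'
  constructor
  · exact ⟨j.val, List.mem_map_of_mem hj, hij⟩
  · exact ⟨k.val, List.mem_map_of_mem hk, hki⟩

/-! ### Sublist pattern splitting -/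

lemma pattern_split {X Y M : List ℕ} {j : ℕ} (h : (X ++ j :: (Y ++ [j])).Sublist M) :
    ∃ A G C, M = A ++ j :: (G ++ j :: C) ∧ X.Sublist A ∧ Y.Sublist G := by
  rw [show X ++ j :: (Y ++ [j]) = X ++ ([j] ++ (Y ++ [j])) from rfl,
    List.append_sublist_iff] at h
  obtain ⟨M₁, M₂, rfl, hXM₁, h₂⟩ := h
  rw [List.append_sublist_iff] at h₂
  obtain ⟨M₃, M₄, rfl, hjM₃, h₃⟩ := h₂
  rw [List.append_sublist_iff] at h₃
  obtain ⟨M₅, M₆, rfl, hYM₅, hjM₆⟩ := h₃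
  obtain ⟨P, Q, rfl⟩ := List.append_of_mem (List.singleton_sublist.1 hjM₃)
  obtain ⟨P', Q', rfl⟩ := List.append_of_mem (List.singleton_sublist.1 hjM₆)
  refine ⟨M₁ ++ P, Q ++ (M₅ ++ P'), Q', by simp, ?_, ?_⟩
  · exact hXM₁.trans (List.sublist_append_left _ _)
  · exact (hYM₅.trans (List.sublist_append_left _ _)).trans (List.sublist_append_right _ _)

lemma extend_sublist {X A G C : List ℕ} {j j' : ℕ} (hX : X.Sublist A) (hj' : j' ∈ G) :
    (X ++ [j']).Sublist (A ++ j :: (G ++ j :: C)) :=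
  hX.append (List.singleton_sublist.2 (by simp [hj']))

/-! ### The staircase lemmas -/

lemma SL (n : ℕ) {c : List (Fin n)} (hc : Canonical c) {W U : List ℕ}
    (hcW : c.map Fin.val = W ++ 0 :: U) :
    ∀ m k j, n - k ≤ m → k ≤ j → j ≤ n - 1 → 1 ≤ k →
      (desc (n-1) k ++ [j]).Sublist W → False := by
  intro m
  induction m with
  | zero => intro k j h1 h2 h3 h4 _; omega
  | succ m ih =>
    intro k j h1 h2 h3 h4 hsub
    have e1 : desc (n-1) k = desc (n-1) (j+1) ++ desc j k :=
      desc_append (n-1) k j (by omega) (by omega)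
    have e2 : desc j k = j :: desc (j-1) k := desc_cons j k (by omega) h2
    have hsub' : (desc (n-1) (j+1) ++ (j :: (desc (j-1) k ++ [j]))).Sublist W := by
      have heq : desc (n-1) k ++ [j] = desc (n-1) (j+1) ++ (j :: (desc (j-1) k ++ [j])) := by
        rw [e1, e2]; simp
      rwa [heq] at hsub
    obtain ⟨A, G, C, hM, hXA, hYG⟩ := pattern_split hsub'
    have hfact : c.map Fin.val = (A) ++ j :: (G ++ j :: (C ++ 0 :: U)) := by
      rw [hcW, hM]; simp
    obtain ⟨⟨j', hj'G, hjj'⟩, -⟩ := canonN hc hfact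
    have hj'n : j' < n := by
      have hmm : j' ∈ c.map Fin.val := by rw [hfact]; simp [hj'G]
      obtain ⟨a, _, rfl⟩ := List.mem_map.1 hmm
      exact a.isLt
    have hnew : (desc (n-1) (j+1) ++ [j']).Sublist W := by
      rw [hM]; exact extend_sublist hXA hj'G
    exact ih (j+1) j' (by omega) (by omega) (by omega) (by omega) hnew

lemma Core (n : ℕ) {c : List (Fin n)} (hc : Canonical c) {W U : List ℕ}
    (hcW : c.map Fin.val = W ++ 0 :: U) (hUn : ∀ t ∈ U, t < n) :
    ∀ m t, n - t ≤ m → 1 ≤ t → t ∈ U → (desc (n-1) t).Sublist W → False := by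
  intro m
  induction m with
  | zero => intro t h1 h2 h3 _; have := hUn t h3; omega
  | succ m ih =>
    intro t h1 h2 htU hsub0
    have htn : t < n := hUn t htU
    obtain ⟨U₁, U₂, rfl⟩ := List.append_of_mem htU
    have e1 : desc (n-1) t = desc (n-1) (t+1) ++ [t] := desc_concat (n-1) t (by omega)
    have hsub := hsub0
    rw [e1] at hsub
    rcases List.append_sublist_iff.1 hsub with ⟨W₁, W₂, rfl, hW₁, hW₂⟩
    obtain ⟨P, Q, rfl⟩ := List.append_of_mem (List.singleton_sublist.1 hW₂)
    have hfactm : c.map Fin.val = (W₁ ++ P) ++ t :: ((Q ++ 0 :: U₁) ++ t :: U₂) := by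
      rw [hcW]; simp
    obtain ⟨⟨j, hjG, htj⟩, -⟩ :=
      canonN hc (P := W₁ ++ P) (G := Q ++ 0 :: U₁) (Q := U₂) (i := t) hfactm
    have hjn : j < n := by
      have hmm : j ∈ c.map Fin.val := by
        rw [hfactm]
        simp only [List.mem_append, List.mem_cons] at hjG ⊢
        tauto
      obtain ⟨a, _, rfl⟩ := List.mem_map.1 hmm
      exact a.isLt
    rcases List.mem_append.1 hjG with hjQ | hj0U
    · have hnew : (desc (n-1) (t+1) ++ [j]).Sublist (W₁ ++ (P ++ t :: Q)) := by
        apply hW₁.append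
        apply List.singleton_sublist.2
        simp [hjQ]
      exact SL n hc hcW (n - (t+1)) (t+1) j (le_refl _) (by omega) (by omega) (by omega) hnew
    · rcases List.mem_cons.1 hj0U with rfl | hjU₁
      · omega
      · have hjU : j ∈ U₁ ++ t :: U₂ := by simp [hjU₁]
        have hsub' : (desc (n-1) j).Sublist (W₁ ++ (P ++ t :: Q)) :=
          (desc_sublist (n-1) t j (le_of_lt htj)).trans hsub0
        exact ih j (by omega) (by omega) hjU hsub'

/-! ### Splitting the full staircase across the distinguished 0 -/

lemma split_stair {n : ℕ} {W U : List ℕ} (hn : 2 ≤ n)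
    (hstair : (desc (n-1) 0).Sublist (W ++ 0 :: (U ++ [0]))) :
    ∃ r, r ≤ n - 1 ∧ (desc (n-1) (r+1)).Sublist W ∧ (desc r 1).Sublist U := by
  have e0 : desc (n-1) 0 = desc (n-1) 1 ++ [0] := desc_concat (n-1) 0 (by omega)
  rw [e0] at hstair
  have hstair' : (desc (n-1) 1 ++ [0]).Sublist ((W ++ 0 :: U) ++ [0]) := by
    simpa using hstair
  have h1 : (desc (n-1) 1).Sublist (W ++ 0 :: U) := by
    have hrev := List.reverse_sublist.mpr hstair'
    rw [List.reverse_append, List.reverse_append] at hrev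
    simp only [List.reverse_cons, List.reverse_nil, List.nil_append] at hrev
    rw [← List.reverse_sublist]
    exact List.cons_sublist_cons.1 hrev
  rcases List.sublist_append_iff.1 h1 with ⟨d₁, d₂, hd, hd₁, hd₂⟩
  have hd₂U : d₂.Sublist U := by
    rcases List.sublist_cons_iff.1 hd₂ with h | ⟨r, hr, hrs⟩
    · exact h
    · exfalso
      have h0 : (0 : ℕ) ∈ desc (n-1) 1 := by
        rw [hd, hr]; simp
      rw [mem_desc] at h0
      omega
  obtain ⟨cm, hcm1, hcmn, hdd₁, hdd₂⟩ := desc_eq_append (by omega) (by omega) hd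
  refine ⟨cm - 1, by omega, ?_, ?_⟩
  · rw [show cm - 1 + 1 = cm by omega, ← hdd₁]; exact hd₁
  · rw [← hdd₂]; exact hd₂U

/-! ### The rigidity lemma for the suffix -/

lemma Rlem : ∀ (r : ℕ) (U : List ℕ),
    (∀ P G Q i, U = P ++ i :: (G ++ i :: Q) → (∃ j ∈ G, i < j) ∧ (∃ k ∈ G, k < i)) →
    (∀ t ∈ U, 1 ≤ t ∧ t ≤ r) → (desc r 1).Sublist U → U = desc r 1 := by
  intro r
  induction r with
  | zero =>
    intro U hor hb _
    have hU : U = [] := by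
      cases U with
      | nil => rfl
      | cons a t => exfalso; have := hb a (by simp); omega
    rw [hU, desc_eq_nil 0 1 (by omega)]
  | succ r ih =>
    intro U hor hb hs
    rw [desc_cons (r+1) 1 (by omega) (by omega), show r + 1 - 1 = r from rfl] at hs
    rcases List.cons_sublist_iff.1 hs with ⟨R₁, R₂, hU, hmem, hR₂⟩
    obtain ⟨α, γ, rfl⟩ := List.append_of_mem hmem
    have hU' : U = α ++ (r+1) :: (γ ++ R₂) := by rw [hU]; simp
    set β := γ ++ R₂ with hβdef
    have hsβ : (desc r 1).Sublist β := hR₂.trans (List.sublist_append_right _ _)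
    have hβr : (r+1) ∉ β := by
      intro hmem'
      obtain ⟨β₁, β₂, hβ⟩ := List.append_of_mem hmem'
      obtain ⟨⟨j, hj, hlt⟩, -⟩ := hor α β₁ β₂ (r+1) (by rw [hU', hβ])
      have : j ∈ U := by rw [hU', hβ]; simp [hj]
      have := hb j this
      omega
    have hbβ : ∀ t ∈ β, 1 ≤ t ∧ t ≤ r := by
      intro t htβ
      have htU : t ∈ U := by rw [hU']; simp [htβ]
      have h1 := hb t htU
      have : t ≠ r + 1 := fun h => hβr (h ▸ htβ)
      omega
    have horβ : ∀ P G Q i, β = P ++ i :: (G ++ i :: Q) →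
        (∃ j ∈ G, i < j) ∧ (∃ k ∈ G, k < i) := by
      intro P G Q i hPQ
      exact hor (α ++ (r+1) :: P) G Q i (by rw [hU', hPQ]; simp)
    have hβ : β = desc r 1 := ih β horβ hbβ hsβ
    have hα : α = [] := by
      rcases List.eq_nil_or_concat α with rfl | ⟨α', t, rfl⟩
      · rfl
      · exfalso
        have htU : t ∈ U := by rw [hU']; simp
        obtain ⟨ht1, htr⟩ := hb t htU
        rcases eq_or_lt_of_le htr with heq | hlt
        · -- t = r+1 : gap between t and the explicit r+1 is empty
          obtain ⟨⟨j, hj, _⟩, -⟩ := hor α' ([] : List ℕ) β (r+1)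
            (by subst heq; rw [hU']; simp [List.concat_eq_append])
          simp at hj
        · -- t ≤ r : t occurs in β = desc r 1 with only larger letters in between
          have htr' : t ≤ r := by omega
          have hsplit : desc r 1 = desc r (t+1) ++ (t :: desc (t-1) 1) := by
            rw [desc_append r 1 t (by omega) htr', desc_cons t 1 ht1 ht1]
          obtain ⟨-, ⟨k, hk, hkt⟩⟩ := hor α' ((r+1) :: desc r (t+1)) (desc (t-1) 1) t
            (by rw [hU', hβ, hsplit]; simp [List.concat_eq_append])
          rcases List.mem_cons.1 hk with rfl | hk'
          · omega
          · rw [mem_desc] at hk'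
            omega
    rw [hU', hα, hβ, desc_cons (r+1) 1 (by omega) (by omega),
      show r + 1 - 1 = r from rfl]
    rfl

/-! ### Assembly helpers -/

lemma phiL_append (n : ℕ) (a b : List (Fin n)) :
    phiL n (a ++ b) = phiL n a * phiL n b := by
  rw [phiL, FreeMonoid.ofList_append, map_mul]; rfl

lemma descList_map_val (n : ℕ) (hn : 1 ≤ n) :
    (descList n 1 n).map Fin.val = desc (n-1) 0 := by
  rw [descList]
  have hf : (List.finRange n).filter
      (fun k => decide (1 ≤ k.val + 1 ∧ k.val + 1 ≤ n)) = List.finRange n := by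
    rw [List.filter_eq_self]
    intro a _
    have := a.isLt
    simp
  rw [hf, List.map_reverse,
    show (List.finRange n).map Fin.val = List.range n by apply List.ext_getElem <;> simp,
    List.range_eq_range', desc, show n - 1 + 1 - 0 = n by omega]

/-- Injectivity of the prefix map on solutions of `x * a_1 = f` whose canonical form
contains `a_1`: if the canonical forms of `x₁, x₂` are `w₁ a_1 u₁` and `w₂ a_1 u₂`
(with `wᵢ, uᵢ` over `{a_2, …, a_n}`) and `φ(w₁) = φ(w₂)`, then `x₁ = x₂`. -/
theorem prefix_map_injective (n : ℕ) (hn : 2 ≤ n) (x1 x2 : K n)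
    (h1 : x1 * gen ⟨0, by omega⟩ = fEl n) (h2 : x2 * gen ⟨0, by omega⟩ = fEl n)
    (w1 u1 w2 u2 : List (Fin n))
    (hw1 : ∀ i ∈ w1, i.val ≠ 0) (hu1 : ∀ i ∈ u1, i.val ≠ 0)
    (hw2 : ∀ i ∈ w2, i.val ≠ 0) (hu2 : ∀ i ∈ u2, i.val ≠ 0)
    (hc1 : Canonical (w1 ++ (⟨0, by omega⟩ : Fin n) :: u1))
    (hphi1 : phiL n (w1 ++ (⟨0, by omega⟩ : Fin n) :: u1) = x1)
    (hc2 : Canonical (w2 ++ (⟨0, by omega⟩ : Fin n) :: u2))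
    (hphi2 : phiL n (w2 ++ (⟨0, by omega⟩ : Fin n) :: u2) = x2)
    (heq : phiL n w1 = phiL n w2) : x1 = x2 := by
  have hz0 : 0 < n := by omega
  have hchain : ∀ a b : ℕ, DescChain (desc a b) := descChain_desc
  have main : ∀ (x : K n) (w u : List (Fin n)),
      (∀ i ∈ w, i.val ≠ 0) → (∀ i ∈ u, i.val ≠ 0) →
      Canonical (w ++ (⟨0, hz0⟩ : Fin n) :: u) →
      phiL n (w ++ (⟨0, hz0⟩ : Fin n) :: u) = x →
      x * gen (⟨0, hz0⟩ : Fin n) = fEl n →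
      ∃ r, r ≤ n - 1 ∧ u.map Fin.val = desc r 1 ∧
        (desc (n-1) (r+1)).Sublist (w.map Fin.val) ∧
        (1 ≤ r → ¬ (desc (n-1) r).Sublist (w.map Fin.val)) := by
    intro x w u hw hu hc hphi hx
    have hmap : (w ++ (⟨0, hz0⟩ : Fin n) :: u).map Fin.val
        = w.map Fin.val ++ 0 :: u.map Fin.val := by simp
    have hUn : ∀ t ∈ u.map Fin.val, t < n := by
      intro t ht; obtain ⟨a, _, rfl⟩ := List.mem_map.1 ht; exact a.isLt
    have hU1 : ∀ t ∈ u.map Fin.val, 1 ≤ t := by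
      intro t ht; obtain ⟨a, ha, rfl⟩ := List.mem_map.1 ht
      have := hu a ha; omega
    have hVeq : phiL n (descList n 1 n)
        = phiL n ((w ++ (⟨0, hz0⟩ : Fin n) :: u) ++ [⟨0, hz0⟩]) := by
      rw [phiL_append, hphi]
      have hgen : phiL n [(⟨0, hz0⟩ : Fin n)] = gen ⟨0, hz0⟩ := rfl
      rw [hgen, hx]
      rfl
    have hstair : (desc (n-1) 0).Sublist
        (((w ++ (⟨0, hz0⟩ : Fin n) :: u) ++ [(⟨0, hz0⟩ : Fin n)]).map Fin.val) := by
      apply sublist_transfer hVeq (hchain _ _)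
      rw [descList_map_val n (by omega)]
    have hstair' : (desc (n-1) 0).Sublist
        (w.map Fin.val ++ 0 :: (u.map Fin.val ++ [0])) := by
      simpa using hstair
    obtain ⟨r, hrle, hWr, hUr⟩ := split_stair hn hstair'
    have hub : ∀ t ∈ u.map Fin.val, 1 ≤ t ∧ t ≤ r := by
      intro t ht
      refine ⟨hU1 t ht, ?_⟩
      by_contra hcon
      push_neg at hcon
      have hsubW : (desc (n-1) t).Sublist (w.map Fin.val) :=
        (desc_sublist (n-1) (r+1) t (by omega)).trans hWr
      exact Core n hc hmap hUn (n - t) t (le_refl _) (hU1 t ht) ht hsubW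
    have horU : ∀ P G Q i, u.map Fin.val = P ++ i :: (G ++ i :: Q) →
        (∃ j ∈ G, i < j) ∧ (∃ k ∈ G, k < i) := by
      intro P G Q i hPQ
      apply canonN hc (P := w.map Fin.val ++ 0 :: P) (G := G) (Q := Q)
      rw [hmap, hPQ]; simp
    have hUeq : u.map Fin.val = desc r 1 := Rlem r _ horU hub hUr
    refine ⟨r, hrle, hUeq, hWr, ?_⟩
    intro hr1 hsubW
    have hrmem : r ∈ u.map Fin.val := by rw [hUeq, mem_desc]; omega
    exact Core n hc hmap hUn (n - r) r (le_refl _) hr1 hrmem hsubW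
  obtain ⟨r₁, hr₁le, hU₁, hW₁, hnot₁⟩ := main x1 w1 u1 hw1 hu1 hc1 hphi1 h1
  obtain ⟨r₂, hr₂le, hU₂, hW₂, hnot₂⟩ := main x2 w2 u2 hw2 hu2 hc2 hphi2 h2
  have hreq : r₁ = r₂ := by
    rcases lt_trichotomy r₁ r₂ with h | h | h
    · exfalso
      apply hnot₂ (by omega)
      apply sublist_transfer heq (hchain _ _)
      exact (desc_sublist (n-1) (r₁+1) r₂ (by omega)).trans hW₁
    · exact h
    · exfalso
      apply hnot₁ (by omega)
      apply sublist_transfer heq.symm (hchain _ _)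
      exact (desc_sublist (n-1) (r₂+1) r₁ (by omega)).trans hW₂
  have huu : u1 = u2 := by
    apply List.map_injective_iff.2 Fin.val_injective
    rw [hU₁, hU₂, hreq]
  rw [← hphi1, ← hphi2, phiL_append, phiL_append, heq, huu]

end Kiselman
end

section
/- Let n ≥ 2. The submonoid of Kiselman's semigroup K_n generated by {a_2, a_3, …, a_n} is isomorphic as a monoid to K_{n-1}, via the map determined by a_i ↦ a_{i-1} for 2 ≤ i ≤ n. -/
namespace Kiselman

-- basic relation lemmas
lemma phi_eq {n : ℕ} {u v : FreeMonoid (Fin n)} (h : Rel n u v) : phi n u = phi n v :=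
  Quotient.sound (ConGen.Rel.of u v h)

lemma gen_idem {n : ℕ} (i : Fin n) : gen i * gen i = gen i := by
  have := phi_eq (n := n) (Or.inl ⟨i, rfl, rfl⟩)
  simpa [gen, map_mul] using this

lemma gen_rel1 {n : ℕ} {i j : Fin n} (h : j < i) :
    gen i * gen j * gen i = gen i * gen j := by
  have := phi_eq (n := n) (Or.inr ⟨i, j, h, Or.inl ⟨rfl, rfl⟩⟩)
  simpa [gen, map_mul] using this

lemma gen_rel2 {n : ℕ} {i j : Fin n} (h : j < i) :
    gen j * gen i * gen j = gen i * gen j := by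
  have := phi_eq (n := n) (Or.inr ⟨i, j, h, Or.inr ⟨rfl, rfl⟩⟩)
  simpa [gen, map_mul] using this

-- embedding free hom
def emb (m : ℕ) : FreeMonoid (Fin m) →* K (m + 1) :=
  FreeMonoid.lift fun i => gen i.succ

lemma emb_rel (m : ℕ) : conGen (Rel m) ≤ Con.ker (emb m) := by
  apply Con.conGen_le.mpr
  rintro u v (⟨i, rfl, rfl⟩ | ⟨i, j, hij, (⟨rfl, rfl⟩ | ⟨rfl, rfl⟩)⟩) <;>
    simp only [Con.ker_rel, map_mul, emb, FreeMonoid.lift_eval_of]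
  · exact gen_idem _
  · exact gen_rel1 (by simp only [Fin.lt_def, Fin.val_succ] at hij ⊢; omega)
  · exact gen_rel2 (by simp only [Fin.lt_def, Fin.val_succ] at hij ⊢; omega)

def embHom (m : ℕ) : K m →* K (m + 1) := Con.lift _ (emb m) (emb_rel m)

-- projection
def down {m : ℕ} (i : Fin (m + 1)) : K m :=
  if h : i.val = 0 then 1 else gen ⟨i.val - 1, by omega⟩

def proj (m : ℕ) : FreeMonoid (Fin (m + 1)) →* K m :=
  FreeMonoid.lift down

lemma proj_rel (m : ℕ) : conGen (Rel (m + 1)) ≤ Con.ker (proj m) := by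
  apply Con.conGen_le.mpr
  rintro u v (⟨i, rfl, rfl⟩ | ⟨i, j, hij, (⟨rfl, rfl⟩ | ⟨rfl, rfl⟩)⟩) <;>
    simp only [Con.ker_rel, map_mul, proj, FreeMonoid.lift_eval_of]
  · by_cases h : i.val = 0 <;> simp [down, h, gen_idem]
  · have hi : i.val ≠ 0 := by have := hij; omega
    by_cases h : j.val = 0
    · simp [down, h, hi, gen_idem]
    · simp only [down, h, hi, dif_neg, not_false_iff]
      exact gen_rel1 (by simp [Fin.lt_def]; omega)
  · have hi : i.val ≠ 0 := by have := hij; omega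
    by_cases h : j.val = 0
    · simp [down, h, hi]
    · simp only [down, h, hi, dif_neg, not_false_iff]
      exact gen_rel2 (by simp [Fin.lt_def]; omega)

def projHom (m : ℕ) : K (m + 1) →* K m := Con.lift _ (proj m) (proj_rel m)

lemma embHom_phi (m : ℕ) (u : FreeMonoid (Fin m)) : embHom m (phi m u) = emb m u :=
  Con.lift_mk' _ _

lemma projHom_phi (m : ℕ) (u : FreeMonoid (Fin (m + 1))) : projHom m (phi (m+1) u) = proj m u :=
  Con.lift_mk' _ _

lemma embHom_gen (m : ℕ) (i : Fin m) : embHom m (gen i) = gen i.succ :=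
  embHom_phi m (FreeMonoid.of i)

lemma projHom_gen (m : ℕ) (i : Fin (m + 1)) : projHom m (gen i) = down i :=
  projHom_phi m (FreeMonoid.of i)

lemma proj_emb (m : ℕ) (x : K m) : projHom m (embHom m x) = x := by
  obtain ⟨w, rfl⟩ := Con.mk'_surjective (c := conGen (Rel m)) x
  show projHom m (embHom m (phi m w)) = phi m w
  rw [embHom_phi]
  have : (projHom m).comp (emb m) = phi m := by
    apply FreeMonoid.hom_eq
    intro i
    show projHom m (emb m (FreeMonoid.of i)) = phi m (FreeMonoid.of i)
    rw [show emb m (FreeMonoid.of i) = gen i.succ from rfl, projHom_gen]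
    simp [down, Fin.val_succ, gen]
  exact DFunLike.congr_fun this w

lemma mem_upper_embHom (m : ℕ) (x : K m) : embHom m x ∈ upper (m + 1) := by
  obtain ⟨w, rfl⟩ := Con.mk'_surjective (c := conGen (Rel m)) x
  show embHom m (phi m w) ∈ upper (m + 1)
  rw [embHom_phi]
  induction w using FreeMonoid.recOn with
  | one => exact (upper (m+1)).one_mem
  | of_mul a w ih =>
    rw [map_mul]
    refine (upper (m+1)).mul_mem ?_ ih
    rw [show emb m (FreeMonoid.of a) = gen a.succ from rfl]
    exact Submonoid.subset_closure ⟨a.succ, by simp, rfl⟩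

lemma upper_le_range (m : ℕ) : upper (m + 1) ≤ MonoidHom.mrange (embHom m) := by
  apply Submonoid.closure_le.mpr
  rintro _ ⟨i, hi, rfl⟩
  have hi' : i.val ≠ 0 := hi
  refine ⟨gen ⟨i.val - 1, by omega⟩, ?_⟩
  rw [embHom_gen]
  congr 1
  apply Fin.ext
  simp only [Fin.val_succ]
  omega


/-- The submonoid of `K n` generated by `a_2, …, a_n` is isomorphic to `K (n-1)` via
`a_i ↦ a_{i-1}`. -/
theorem upper_iso (n : ℕ) (hn : 2 ≤ n) :
    ∃ e : (upper n) ≃* K (n - 1),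
      ∀ (i : Fin n) (hi : i.val ≠ 0) (hmem : gen i ∈ upper n),
        e ⟨gen i, hmem⟩ = gen (⟨i.val - 1, by omega⟩ : Fin (n - 1)) := by
  obtain ⟨m, rfl⟩ : ∃ m, n = m + 1 := ⟨n - 1, by omega⟩
  set π : upper (m + 1) →* K m := (projHom m).comp (upper (m+1)).subtype with hπ
  have hinv : ∀ x : K m, embHom m x ∈ upper (m + 1) := mem_upper_embHom m
  refine ⟨{ toFun := π, invFun := fun x => ⟨embHom m x, hinv x⟩,
            left_inv := ?_, right_inv := ?_, map_mul' := π.map_mul }, ?_⟩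
  · rintro ⟨y, hy⟩
    obtain ⟨x, rfl⟩ := upper_le_range m hy
    ext
    show embHom m (π ⟨embHom m x, hy⟩) = embHom m x
    rw [hπ]
    simp only [MonoidHom.comp_apply, Submonoid.coe_subtype]
    rw [proj_emb]
  · intro x
    show π ⟨embHom m x, hinv x⟩ = x
    rw [hπ]
    simp only [MonoidHom.comp_apply, Submonoid.coe_subtype]
    exact proj_emb m x
  · intro i hi hmem
    show π ⟨gen i, hmem⟩ = _
    rw [hπ]
    simp only [MonoidHom.comp_apply, Submonoid.coe_subtype]
    rw [projHom_gen]
    simp [down, hi]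
end Kiselman
end
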